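/- arXiv:1811.01303 — 2 statements merged into one kernel-verified Lean document; each statement's English description precedes it below -/
import Mathlib

section
/- Let A ∈ ℝ^{n×n}, let S be a finite set of pairs (i,t) with i ∈ {1,...,n} and t ∈ ℝ, and suppose the family of vectors Φ = (e^{A^T t} e_i : (i,t) ∈ S) spans ℝ^n. Then the pair (A, C_Ω) is observable, where Ω = {i : (i,t) ∈ S for some t} and C_Ω is the matrix whose rows are the standard basis vectors e_i^T for i ∈ Ω. -/
open Matrix BigOperators

section Aux

variable {n : ℕ}

/-- Every power of a matrix lies in the span of the powers below `n`. -/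
lemma pow_mem_span_pow_lt (hn : 0 < n) (M : Matrix (Fin n) (Fin n) ℝ) (m : ℕ) :
    M ^ m ∈ Submodule.span ℝ {B : Matrix (Fin n) (Fin n) ℝ | ∃ k < n, B = M ^ k} := by
  set W := Submodule.span ℝ {B : Matrix (Fin n) (Fin n) ℝ | ∃ k < n, B = M ^ k}
  have hmod := Matrix.pow_eq_aeval_mod_charpoly M m
  set q := (Polynomial.X ^ m) %ₘ M.charpoly with hq
  have hdeg : q.natDegree < n := by
    rcases eq_or_ne q 0 with h0 | h0
    · simpa [h0] using hn
    · have h1 : q.degree < M.charpoly.degree :=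
        Polynomial.degree_modByMonic_lt _ M.charpoly_monic
      have h2 : M.charpoly.degree = (n : ℕ) := by
        simpa [Matrix.charpoly_natDegree_eq_dim] using
          Polynomial.degree_eq_natDegree (M.charpoly_monic.ne_zero)
      rw [Polynomial.natDegree_lt_iff_degree_lt h0]
      rw [h2] at h1
      exact_mod_cast h1
  rw [hmod, Polynomial.aeval_eq_sum_range' hdeg]
  refine Submodule.sum_mem _ fun i hi => Submodule.smul_mem _ _ ?_
  exact Submodule.subset_span ⟨i, Finset.mem_range.mp hi, rfl⟩

/-- The matrix exponential lies in the span of the powers below `n`. -/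
lemma exp_mem_span_pow_lt (hn : 0 < n) (M : Matrix (Fin n) (Fin n) ℝ) (t : ℝ) :
    NormedSpace.exp (t • M) ∈
      Submodule.span ℝ {B : Matrix (Fin n) (Fin n) ℝ | ∃ k < n, B = M ^ k} := by
  letI : SeminormedRing (Matrix (Fin n) (Fin n) ℝ) := Matrix.linftyOpSemiNormedRing
  letI : NormedRing (Matrix (Fin n) (Fin n) ℝ) := Matrix.linftyOpNormedRing
  letI : NormedAlgebra ℝ (Matrix (Fin n) (Fin n) ℝ) := Matrix.linftyOpNormedAlgebra
  set W := Submodule.span ℝ {B : Matrix (Fin n) (Fin n) ℝ | ∃ k < n, B = M ^ k}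
  have hclosed : IsClosed (W : Set (Matrix (Fin n) (Fin n) ℝ)) :=
    Submodule.closed_of_finiteDimensional W
  have hterm : ∀ k : ℕ, ((k.factorial : ℝ))⁻¹ • (t • M) ^ k ∈ W := by
    intro k
    have : (t • M) ^ k = t ^ k • M ^ k := smul_pow t M k
    rw [this]
    exact Submodule.smul_mem _ _ (Submodule.smul_mem _ _ (pow_mem_span_pow_lt hn M k))
  have hsum : HasSum (fun k : ℕ => ((k.factorial : ℝ))⁻¹ • (t • M) ^ k)
      (NormedSpace.exp (t • M)) := by
    rw [NormedSpace.exp_eq_tsum ℝ]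
    exact (NormedSpace.expSeries_summable' (𝕂 := ℝ) (t • M)).hasSum
  refine hclosed.mem_of_tendsto hsum ?_
  exact Filter.Eventually.of_forall fun s => Submodule.sum_mem _ fun k _ => hterm k

end Aux

/-- If the family (e^{Aᵀt} e_i : (i,t) ∈ 𝔖) spans ℝ^n, then the pair
(A, C_Ω) is observable, i.e. the rows e_iᵀ A^k (i ∈ Ω, k < n) of the
observability matrix span ℝ^n. -/
theorem frame_implies_observable
    (n : ℕ) (A : Matrix (Fin n) (Fin n) ℝ) (𝔖 : Finset (Fin n × ℝ))
    (hspan : Submodule.span ℝ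
        {v : Fin n → ℝ | ∃ p ∈ 𝔖, v = NormedSpace.exp (p.2 • Aᵀ) *ᵥ Pi.single p.1 1} = ⊤) :
    Submodule.span ℝ
      {v : Fin n → ℝ | ∃ i : Fin n, (∃ t : ℝ, (i, t) ∈ 𝔖) ∧
          ∃ k : ℕ, k < n ∧ v = (Aᵀ) ^ k *ᵥ Pi.single i 1} = ⊤ := by
  rcases Nat.eq_zero_or_pos n with hn | hn
  · subst hn
    refine eq_top_iff.mpr fun x _ => ?_
    have hx : x = 0 := Subsingleton.elim x 0
    simp [hx]
  set V := Submodule.span ℝ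
      {v : Fin n → ℝ | ∃ i : Fin n, (∃ t : ℝ, (i, t) ∈ 𝔖) ∧
          ∃ k : ℕ, k < n ∧ v = (Aᵀ) ^ k *ᵥ Pi.single i 1}
  rw [eq_top_iff, ← hspan, Submodule.span_le]
  rintro v ⟨⟨i, t⟩, hp, rfl⟩
  -- linear map: B ↦ B *ᵥ e_i
  let f : Matrix (Fin n) (Fin n) ℝ →ₗ[ℝ] (Fin n → ℝ) :=
    { toFun := fun B => B *ᵥ Pi.single i 1
      map_add' := fun B C => Matrix.add_mulVec B C _
      map_smul' := fun c B => Matrix.smul_mulVec c B _ }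
  have hexp : NormedSpace.exp (t • Aᵀ) ∈
      Submodule.span ℝ {B : Matrix (Fin n) (Fin n) ℝ | ∃ k < n, B = Aᵀ ^ k} :=
    exp_mem_span_pow_lt hn Aᵀ t
  have hmap : f (NormedSpace.exp (t • Aᵀ)) ∈
      Submodule.map f (Submodule.span ℝ {B : Matrix (Fin n) (Fin n) ℝ | ∃ k < n, B = Aᵀ ^ k}) :=
    Submodule.mem_map_of_mem hexp
  rw [Submodule.map_span] at hmap
  refine Submodule.span_le.mpr ?_ hmap
  rintro w ⟨B, ⟨k, hk, rfl⟩, rfl⟩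
  exact Submodule.subset_span ⟨i, ⟨t, hp⟩, k, hk, rfl⟩
end

section
/- Let A ∈ ℝ^{n×n}, let δ* > 0 satisfy δ* < (ln 2)/‖A‖ (operator 2-norm), and let t₁, ..., t_n ∈ [0, δ*). For any vector c = (c₁,...,c_n) ∈ ℝ^n, one has ‖Σ_{i=1}^n c_i e^{A t_i} e_i − Σ_{i=1}^n c_i e_i‖ ≤ (e^{‖A‖δ*} − 1)‖c‖, and hence (2 − e^{‖A‖δ*})‖c‖ ≤ ‖Σ_{i=1}^n c_i e^{A t_i} e_i‖. Consequently the vectors e^{A t₁} e₁, ..., e^{A t_n} e_n are linearly independent and form a frame for ℝ^n. -/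
open BigOperators

set_option maxHeartbeats 1000000
set_option synthInstance.maxHeartbeats 400000

open Nat
private lemma pow_smul_apply' (n : ℕ)
    (A : EuclideanSpace ℝ (Fin n) →L[ℝ] EuclideanSpace ℝ (Fin n))
    (s : ℝ) (k : ℕ) (v : EuclideanSpace ℝ (Fin n)) :
    ((s • A) ^ k) v = s ^ k • (A ^ k) v := by
  induction k generalizing v with
  | zero => simp
  | succ k ih =>
    simp only [pow_succ, ContinuousLinearMap.mul_apply, ContinuousLinearMap.smul_apply, ih,
      map_smul, smul_smul, mul_comm]

private lemma pow_apply_norm_le' (n : ℕ)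
    (A : EuclideanSpace ℝ (Fin n) →L[ℝ] EuclideanSpace ℝ (Fin n))
    (k : ℕ) (v : EuclideanSpace ℝ (Fin n)) :
    ‖(A ^ k) v‖ ≤ ‖A‖ ^ k * ‖v‖ := by
  induction k generalizing v with
  | zero => simp
  | succ k ih =>
    rw [pow_succ, ContinuousLinearMap.mul_apply]
    calc ‖(A ^ k) (A v)‖ ≤ ‖A‖ ^ k * ‖A v‖ := ih (A v)
    _ ≤ ‖A‖ ^ k * (‖A‖ * ‖v‖) :=
        mul_le_mul_of_nonneg_left (A.le_opNorm v) (by positivity)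
    _ = ‖A‖ ^ (k + 1) * ‖v‖ := by ring

private lemma exp_apply_eq' (n : ℕ)
    (A : EuclideanSpace ℝ (Fin n) →L[ℝ] EuclideanSpace ℝ (Fin n)) (s : ℝ)
    (v : EuclideanSpace ℝ (Fin n)) :
    (NormedSpace.exp (s • A)) v = ∑' (k : ℕ), ((k ! : ℝ)⁻¹ * s ^ k) • (A ^ k) v := by
  rw [NormedSpace.exp_eq_tsum (𝕂 := ℝ)]
  have := ((ContinuousLinearMap.apply ℝ (EuclideanSpace ℝ (Fin n)) v).map_tsum
    (NormedSpace.expSeries_summable' (𝕂 := ℝ) (s • A)))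
  simp only [ContinuousLinearMap.apply_apply] at this
  rw [this]
  congr 1
  funext k
  rw [ContinuousLinearMap.smul_apply, pow_smul_apply', smul_smul]

private lemma sum_single_eq' (n : ℕ) (d : EuclideanSpace ℝ (Fin n)) :
    (∑ i, d i • EuclideanSpace.single i (1:ℝ)) = d := by
  simpa [EuclideanSpace.basisFun_apply, EuclideanSpace.basisFun_repr] using
    (EuclideanSpace.basisFun (Fin n) ℝ).sum_repr d

/-- If δ* < (ln 2)/‖A‖ and t₁,...,t_n ∈ [0, δ*), then for every c ∈ ℝ^n
‖Σ c_i e^{A t_i} e_i − Σ c_i e_i‖ ≤ (e^{‖A‖δ*} − 1)‖c‖ and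
(2 − e^{‖A‖δ*})‖c‖ ≤ ‖Σ c_i e^{A t_i} e_i‖; consequently the vectors
e^{A t_i} e_i are linearly independent and form a frame (span ℝ^n). -/
theorem small_dwell_time_frame
    (n : ℕ) (A : EuclideanSpace ℝ (Fin n) →L[ℝ] EuclideanSpace ℝ (Fin n))
    (hA : A ≠ 0) (δ : ℝ) (hδ : 0 < δ) (hδA : δ < Real.log 2 / ‖A‖)
    (t : Fin n → ℝ) (ht : ∀ i, t i ∈ Set.Ico (0 : ℝ) δ) :
    (∀ c : EuclideanSpace ℝ (Fin n),
      ‖(∑ i, c i • (NormedSpace.exp (t i • A)) (EuclideanSpace.single i 1)) -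
          ∑ i, c i • (EuclideanSpace.single i (1 : ℝ))‖
        ≤ (Real.exp (‖A‖ * δ) - 1) * ‖c‖ ∧
      (2 - Real.exp (‖A‖ * δ)) * ‖c‖
        ≤ ‖∑ i, c i • (NormedSpace.exp (t i • A)) (EuclideanSpace.single i 1)‖) ∧
    LinearIndependent ℝ
      (fun i => (NormedSpace.exp (t i • A)) (EuclideanSpace.single i (1 : ℝ))) ∧
    Submodule.span ℝ
      (Set.range fun i => (NormedSpace.exp (t i • A)) (EuclideanSpace.single i (1 : ℝ))) = ⊤ := by
  have hAn : (0:ℝ) < ‖A‖ := norm_pos_iff.mpr hA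
  have hAδ : ‖A‖ * δ < Real.log 2 := by
    rw [mul_comm]; exact (lt_div_iff₀ hAn).mp hδA
  have hexp2 : Real.exp (‖A‖ * δ) < 2 := by
    calc Real.exp (‖A‖ * δ) < Real.exp (Real.log 2) := Real.exp_lt_exp.mpr hAδ
    _ = 2 := Real.exp_log (by norm_num)
  -- the key per-c estimates
  have key : ∀ c : EuclideanSpace ℝ (Fin n),
      ‖(∑ i, c i • (NormedSpace.exp (t i • A)) (EuclideanSpace.single i 1)) -
          ∑ i, c i • (EuclideanSpace.single i (1 : ℝ))‖
        ≤ (Real.exp (‖A‖ * δ) - 1) * ‖c‖ ∧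
      (2 - Real.exp (‖A‖ * δ)) * ‖c‖
        ≤ ‖∑ i, c i • (NormedSpace.exp (t i • A)) (EuclideanSpace.single i 1)‖ := by
    intro c
    -- the scaled vectors
    set w : ℕ → EuclideanSpace ℝ (Fin n) :=
      fun k => ∑ i, (c i * t i ^ k) • EuclideanSpace.single i (1:ℝ) with hw
    have hwnorm : ∀ k, ‖w k‖ ≤ δ ^ k * ‖c‖ := by
      intro k
      have hwe : w k = (WithLp.toLp 2 (fun i => c i * t i ^ k) : EuclideanSpace ℝ (Fin n)) := by
        have := sum_single_eq' n (WithLp.toLp 2 (fun i => c i * t i ^ k) : EuclideanSpace ℝ (Fin n))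
        simpa [hw] using this
      rw [hwe, EuclideanSpace.norm_eq, EuclideanSpace.norm_eq]
      have hsum_le : (∑ i, ‖c i * t i ^ k‖ ^ 2) ≤ ∑ i, (δ ^ k) ^ 2 * ‖c i‖ ^ 2 := by
        apply Finset.sum_le_sum
        intro i _
        have h1 : |t i ^ k| ≤ δ ^ k := by
          rw [abs_of_nonneg (pow_nonneg (ht i).1 _)]
          exact pow_le_pow_left₀ (ht i).1 (le_of_lt (ht i).2) k
        have : ‖c i * t i ^ k‖ ≤ δ ^ k * ‖c i‖ := by
          rw [norm_mul]
          calc ‖c i‖ * ‖t i ^ k‖ ≤ ‖c i‖ * δ ^ k :=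
            mul_le_mul_of_nonneg_left (by simpa using h1) (norm_nonneg _)
          _ = δ ^ k * ‖c i‖ := mul_comm _ _
        calc ‖c i * t i ^ k‖ ^ 2 ≤ (δ ^ k * ‖c i‖) ^ 2 := by
              apply pow_le_pow_left₀ (norm_nonneg _) this
        _ = (δ ^ k) ^ 2 * ‖c i‖ ^ 2 := by ring
      calc Real.sqrt (∑ i, ‖c i * t i ^ k‖ ^ 2)
          ≤ Real.sqrt (∑ i, (δ ^ k) ^ 2 * ‖c i‖ ^ 2) := Real.sqrt_le_sqrt hsum_le
      _ = δ ^ k * Real.sqrt (∑ i, ‖c i‖ ^ 2) := by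
          rw [← Finset.mul_sum, Real.sqrt_mul (by positivity),
            Real.sqrt_sq (by positivity)]
    -- the series terms
    set F : ℕ → EuclideanSpace ℝ (Fin n) :=
      fun k => ((k ! : ℝ)⁻¹ * 1) • (A ^ k) (w k) with hF
    have hFnorm : ∀ k, ‖F k‖ ≤ (‖A‖ * δ) ^ k / k ! * ‖c‖ := by
      intro k
      have h1 : ‖(A ^ k) (w k)‖ ≤ ‖A‖ ^ k * (δ ^ k * ‖c‖) := by
        calc ‖(A ^ k) (w k)‖ ≤ ‖A‖ ^ k * ‖w k‖ := pow_apply_norm_le' n A k _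
        _ ≤ ‖A‖ ^ k * (δ ^ k * ‖c‖) :=
            mul_le_mul_of_nonneg_left (hwnorm k) (by positivity)
      have h2 : ‖F k‖ = (k ! : ℝ)⁻¹ * ‖(A ^ k) (w k)‖ := by
        rw [hF]
        simp [norm_smul, abs_of_nonneg (by positivity : (0:ℝ) ≤ ((k ! : ℝ))⁻¹)]
      rw [h2]
      calc (k ! : ℝ)⁻¹ * ‖(A ^ k) (w k)‖ ≤ (k ! : ℝ)⁻¹ * (‖A‖ ^ k * (δ ^ k * ‖c‖)) :=
        mul_le_mul_of_nonneg_left h1 (by positivity)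
      _ = (‖A‖ * δ) ^ k / k ! * ‖c‖ := by rw [mul_pow]; field_simp
    have hu : Summable (fun k : ℕ => (‖A‖ * δ) ^ k / k ! * ‖c‖) :=
      (Real.summable_pow_div_factorial (‖A‖ * δ)).mul_right _
    have hFsummable : Summable F :=
      Summable.of_norm_bounded hu hFnorm
    -- rewrite the sum as a tsum
    have hstep : (∑ i, c i • (NormedSpace.exp (t i • A)) (EuclideanSpace.single i 1))
        = ∑' k, F k := by
      have hterm : ∀ i : Fin n, c i • (NormedSpace.exp (t i • A)) (EuclideanSpace.single i 1)
          = ∑' (k : ℕ), (c i * ((k ! : ℝ)⁻¹ * t i ^ k)) • (A ^ k) (EuclideanSpace.single i 1) := by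
        intro i
        rw [exp_apply_eq', ← tsum_const_smul'' (c i)]
        congr 1; funext k; rw [smul_smul]
      have hgsummable : ∀ i : Fin n, Summable (fun k : ℕ =>
          (c i * ((k ! : ℝ)⁻¹ * t i ^ k)) • (A ^ k) (EuclideanSpace.single i 1)) := by
        intro i
        have := ((NormedSpace.expSeries_summable' (𝕂 := ℝ) (t i • A)).map
            (ContinuousLinearMap.apply ℝ (EuclideanSpace ℝ (Fin n)) (EuclideanSpace.single i 1))
            (ContinuousLinearMap.continuous _)).const_smul (c i)
        apply this.congr
        intro k
        simp only [Function.comp_apply, ContinuousLinearMap.apply_apply,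
          ContinuousLinearMap.smul_apply, pow_smul_apply', smul_smul]
      calc (∑ i, c i • (NormedSpace.exp (t i • A)) (EuclideanSpace.single i 1))
          = ∑ i, ∑' (k : ℕ), (c i * ((k ! : ℝ)⁻¹ * t i ^ k)) • (A ^ k)
              (EuclideanSpace.single i 1) := by
            exact Finset.sum_congr rfl fun i _ => hterm i
      _ = ∑' (k : ℕ), ∑ i, (c i * ((k ! : ℝ)⁻¹ * t i ^ k)) • (A ^ k)
              (EuclideanSpace.single i 1) :=
            (Summable.tsum_finsetSum fun i _ => hgsummable i).symm
      _ = ∑' k, F k := by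
            congr 1; funext k
            rw [hF]
            simp only
            rw [map_sum, Finset.smul_sum]
            apply Finset.sum_congr rfl
            intro i _
            rw [map_smul, smul_smul]
            congr 1
            ring
    have hF0 : F 0 = ∑ i, c i • (EuclideanSpace.single i (1 : ℝ)) := by
      rw [hF, hw]
      simp
    have hD : (∑ i, c i • (NormedSpace.exp (t i • A)) (EuclideanSpace.single i 1)) -
        (∑ i, c i • (EuclideanSpace.single i (1 : ℝ))) = ∑' k, F (k + 1) := by
      rw [hstep, ← hF0, Summable.tsum_eq_zero_add hFsummable]
      abel
    have hnormD : ‖(∑ i, c i • (NormedSpace.exp (t i • A)) (EuclideanSpace.single i 1)) -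
        (∑ i, c i • (EuclideanSpace.single i (1 : ℝ)))‖ ≤ (Real.exp (‖A‖ * δ) - 1) * ‖c‖ := by
      rw [hD]
      have h1 : ‖∑' k, F (k + 1)‖ ≤ ∑' k, ((‖A‖ * δ) ^ (k + 1) / (k + 1)! * ‖c‖) := by
        apply tsum_of_norm_bounded (h := fun k => hFnorm (k + 1))
        exact (hu.comp_injective (add_left_injective 1)).hasSum
      have h2 : ∑' (k : ℕ), ((‖A‖ * δ) ^ (k + 1) / (k + 1)! * ‖c‖)
          = (Real.exp (‖A‖ * δ) - 1) * ‖c‖ := by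
        rw [tsum_mul_right]
        have h3 : Real.exp (‖A‖ * δ) = ∑' (k : ℕ), (‖A‖ * δ) ^ k / k ! := by
          rw [Real.exp_eq_exp_ℝ, NormedSpace.exp_eq_tsum_div]
        have h4 := Summable.tsum_eq_zero_add (Real.summable_pow_div_factorial (‖A‖ * δ))
        rw [← h3] at h4
        simp only [pow_zero, Nat.factorial_zero, Nat.cast_one, div_one] at h4
        have h5 : (∑' (k : ℕ), (‖A‖ * δ) ^ (k + 1) / (k + 1)!)
            = Real.exp (‖A‖ * δ) - 1 := by linarith
        rw [h5]
      exact le_trans h1 (le_of_eq h2)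
    constructor
    · exact hnormD
    · have hcnorm : ‖∑ i, c i • (EuclideanSpace.single i (1 : ℝ))‖ = ‖c‖ := by
        rw [sum_single_eq']
      have := norm_sub_norm_le (∑ i, c i • (NormedSpace.exp (t i • A))
        (EuclideanSpace.single i 1)) (∑ i, c i • (EuclideanSpace.single i (1 : ℝ)))
      -- ‖S‖ ≥ ‖∑cᵢeᵢ‖ - ‖S - ∑cᵢeᵢ‖
      have h5 : ‖∑ i, c i • (EuclideanSpace.single i (1 : ℝ))‖ -
          ‖(∑ i, c i • (NormedSpace.exp (t i • A)) (EuclideanSpace.single i 1)) -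
            (∑ i, c i • (EuclideanSpace.single i (1 : ℝ)))‖
          ≤ ‖∑ i, c i • (NormedSpace.exp (t i • A)) (EuclideanSpace.single i 1)‖ := by
        have h7 := norm_sub_norm_le (∑ i, c i • (EuclideanSpace.single i (1 : ℝ)))
          (∑ i, c i • (NormedSpace.exp (t i • A)) (EuclideanSpace.single i 1))
        rw [norm_sub_rev] at h7
        linarith
      have h6 : ‖c‖ - (Real.exp (‖A‖ * δ) - 1) * ‖c‖
          ≤ ‖∑ i, c i • (NormedSpace.exp (t i • A)) (EuclideanSpace.single i 1)‖ := by
        rw [hcnorm] at h5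
        linarith
      calc (2 - Real.exp (‖A‖ * δ)) * ‖c‖ = ‖c‖ - (Real.exp (‖A‖ * δ) - 1) * ‖c‖ := by ring
      _ ≤ _ := h6
  refine ⟨key, ?_, ?_⟩
  · -- linear independence
    have hli : LinearIndependent ℝ
        (fun i => (NormedSpace.exp (t i • A)) (EuclideanSpace.single i (1 : ℝ))) := by
      rw [Fintype.linearIndependent_iff]
      intro g hg i
      have h := (key ((WithLp.equiv 2 (Fin n → ℝ)).symm g)).2
      have hge : (∑ j, ((WithLp.equiv 2 (Fin n → ℝ)).symm g) j • (NormedSpace.exp (t j • A))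
          (EuclideanSpace.single j 1)) = 0 := hg
      rw [hge, norm_zero] at h
      have hpos : 0 < 2 - Real.exp (‖A‖ * δ) := by linarith
      have h0 : ‖(WithLp.equiv 2 (Fin n → ℝ)).symm g‖ ≤ 0 := nonpos_of_mul_nonpos_right h hpos
      have hz := norm_le_zero_iff.mp h0
      calc g i = ((WithLp.equiv 2 (Fin n → ℝ)).symm g) i := rfl
      _ = (0 : EuclideanSpace ℝ (Fin n)) i := by rw [hz]
      _ = 0 := rfl
    exact hli
  · -- span
    have hli : LinearIndependent ℝ
        (fun i => (NormedSpace.exp (t i • A)) (EuclideanSpace.single i (1 : ℝ))) := by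
      rw [Fintype.linearIndependent_iff]
      intro g hg i
      have h := (key ((WithLp.equiv 2 (Fin n → ℝ)).symm g)).2
      have hge : (∑ j, ((WithLp.equiv 2 (Fin n → ℝ)).symm g) j • (NormedSpace.exp (t j • A))
          (EuclideanSpace.single j 1)) = 0 := hg
      rw [hge, norm_zero] at h
      have hpos : 0 < 2 - Real.exp (‖A‖ * δ) := by linarith
      have h0 : ‖(WithLp.equiv 2 (Fin n → ℝ)).symm g‖ ≤ 0 := nonpos_of_mul_nonpos_right h hpos
      have hz := norm_le_zero_iff.mp h0
      calc g i = ((WithLp.equiv 2 (Fin n → ℝ)).symm g) i := rfl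
      _ = (0 : EuclideanSpace ℝ (Fin n)) i := by rw [hz]
      _ = 0 := rfl
    exact hli.span_eq_top_of_card_eq_finrank' (by simp)
end
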